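/- arXiv:2506.20955 — 5 statements merged into one kernel-verified Lean document; each statement's English description precedes it below -/
import Mathlib

section
/- Suppose 0 < θ < 8a/(27Rb). Then there exist real numbers v_α, v_β with b < v_α < v_β such that the partial derivative ∂p/∂v(v,θ) = 2a/v³ - Rθ/(v-b)² is negative on (b, v_α), zero at v_α and v_β, positive on (v_α, v_β), and negative on (v_β, +∞); consequently the map v ↦ p(v,θ) is strictly decreasing on (b, v_α], strictly increasing on [v_α, v_β], and strictly decreasing on [v_β, +∞). -/
/-!
For `v > b`, `∂p/∂v (v, θ) = (g v - Rθ) / (v - b)²` with `g v = 2a(v - b)² / v³`.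
The function `g` vanishes at `b`, increases on `[b, 3b]` up to `g (3b) = 8a / (27b)`, and then
decreases to `0`. So for `0 < Rθ < 8a / (27b)` the level `Rθ` is crossed exactly once on each
side of `3b`, at `v_α` and `v_β`, which gives the sign pattern of `∂p/∂v` and hence the
monotonicity of `p`.
-/

open Set

theorem strictMonoOn_of_forall_hasDerivAt_pos {D : Set ℝ} (hD : Convex ℝ D) {f f' : ℝ → ℝ}
    (hf : ∀ x ∈ D, HasDerivAt f (f' x) x) (hf' : ∀ x ∈ interior D, 0 < f' x) :
    StrictMonoOn f D :=
  strictMonoOn_of_hasDerivWithinAt_pos hD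
    (fun x hx => (hf x hx).continuousAt.continuousWithinAt)
    (fun x hx => (hf x (interior_subset hx)).hasDerivWithinAt) hf'

theorem strictAntiOn_of_forall_hasDerivAt_neg {D : Set ℝ} (hD : Convex ℝ D) {f f' : ℝ → ℝ}
    (hf : ∀ x ∈ D, HasDerivAt f (f' x) x) (hf' : ∀ x ∈ interior D, f' x < 0) :
    StrictAntiOn f D :=
  strictAntiOn_of_hasDerivWithinAt_neg hD
    (fun x hx => (hf x hx).continuousAt.continuousWithinAt)
    (fun x hx => (hf x (interior_subset hx)).hasDerivWithinAt) hf'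

theorem exists_two_crossings_of_strictMonoOn_of_strictAntiOn {f : ℝ → ℝ} {x₀ m M c : ℝ}
    (hx₀m : x₀ ≤ m) (hmM : m ≤ M) (hf : ContinuousOn f (Ici x₀))
    (hmono : StrictMonoOn f (Icc x₀ m)) (hanti : StrictAntiOn f (Ici m))
    (hx₀ : f x₀ < c) (hm : c < f m) (hM : f M < c) :
    ∃ α β, x₀ < α ∧ α < m ∧ m < β ∧ f α = c ∧ f β = c ∧
      (∀ x ∈ Ioo x₀ α, f x < c) ∧ (∀ x ∈ Ioo α β, c < f x) ∧ ∀ x ∈ Ioi β, f x < c := by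
  obtain ⟨α, ⟨hx₀α, hαm⟩, hα⟩ :=
    intermediate_value_Ioo hx₀m (hf.mono Icc_subset_Ici_self) ⟨hx₀, hm⟩
  obtain ⟨β, ⟨hmβ, -⟩, hβ⟩ :=
    intermediate_value_Ioo' hmM (hf.mono (Icc_subset_Ici_iff hmM |>.2 hx₀m)) ⟨hM, hm⟩
  have hαIcc : α ∈ Icc x₀ m := ⟨hx₀α.le, hαm.le⟩
  refine ⟨α, β, hx₀α, hαm, hmβ, hα, hβ, ?_, ?_, ?_⟩
  · rintro x ⟨hx₀x, hxα⟩
    exact hα ▸ hmono ⟨hx₀x.le, hxα.le.trans hαm.le⟩ hαIcc hxα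
  · rintro x ⟨hαx, hxβ⟩
    rcases le_or_gt x m with hxm | hmx
    · exact hα ▸ hmono hαIcc ⟨(hx₀α.trans hαx).le, hxm⟩ hαx
    · exact hβ ▸ hanti hmx.le (mem_Ici.2 hmβ.le) hxβ
  · intro x hβx
    exact hβ ▸ hanti (mem_Ici.2 hmβ.le) (mem_Ici.2 (hmβ.trans hβx).le) hβx

namespace VanDerWaals

/-- The function `g` of the proof sketch: `R` times the spinodal temperature at volume `v`. -/
noncomputable def spinodal (a b v : ℝ) : ℝ := 2 * a * (v - b) ^ 2 / v ^ 3

variable {a b c v : ℝ}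

theorem hasDerivAt_pressure (hv : v ≠ 0) (hvb : v ≠ b) :
    HasDerivAt (fun v => -a / v ^ 2 + c / (v - b)) (2 * a / v ^ 3 - c / (v - b) ^ 2) v := by
  have h := ((hasDerivAt_const v (-a)).div (hasDerivAt_pow 2 v) (pow_ne_zero 2 hv)).add
    ((hasDerivAt_const v c).div ((hasDerivAt_id v).sub_const b) (sub_ne_zero.2 hvb))
  refine h.congr_deriv ?_
  simp only [id, Nat.cast_ofNat]
  field_simp
  ring

theorem pressure_deriv_eq (hvb : v ≠ b) :
    2 * a / v ^ 3 - c / (v - b) ^ 2 = (spinodal a b v - c) / (v - b) ^ 2 := by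
  rw [spinodal, sub_div, div_div, mul_div_mul_right _ _ (pow_ne_zero 2 (sub_ne_zero.2 hvb))]

theorem pressure_deriv_neg (hv : b < v) (h : spinodal a b v < c) :
    2 * a / v ^ 3 - c / (v - b) ^ 2 < 0 := by
  rw [pressure_deriv_eq hv.ne']
  exact div_neg_of_neg_of_pos (sub_neg.2 h) (pow_pos (sub_pos.2 hv) 2)

theorem pressure_deriv_pos (hv : b < v) (h : c < spinodal a b v) :
    0 < 2 * a / v ^ 3 - c / (v - b) ^ 2 := by
  rw [pressure_deriv_eq hv.ne']
  exact div_pos (sub_pos.2 h) (pow_pos (sub_pos.2 hv) 2)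

theorem pressure_deriv_eq_zero (hv : b < v) (h : spinodal a b v = c) :
    2 * a / v ^ 3 - c / (v - b) ^ 2 = 0 := by
  rw [pressure_deriv_eq hv.ne', h, sub_self, zero_div]

theorem hasDerivAt_spinodal (hv : v ≠ 0) :
    HasDerivAt (spinodal a b) (2 * a * (v - b) * (3 * b - v) / v ^ 4) v := by
  have h := (((hasDerivAt_id v).sub_const b).pow 2 |>.const_mul (2 * a)).div
    (hasDerivAt_pow 3 v) (pow_ne_zero 3 hv)
  refine h.congr_deriv ?_
  simp only [id, Nat.cast_ofNat, Pi.pow_apply]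
  field_simp
  ring

theorem continuousOn_spinodal (hb : 0 < b) : ContinuousOn (spinodal a b) (Ici b) :=
  fun _ hv => (hasDerivAt_spinodal (hb.trans_le hv).ne').continuousAt.continuousWithinAt

theorem strictMonoOn_spinodal (ha : 0 < a) (hb : 0 < b) :
    StrictMonoOn (spinodal a b) (Icc b (3 * b)) := by
  refine strictMonoOn_of_forall_hasDerivAt_pos (convex_Icc _ _)
    (fun v hv => hasDerivAt_spinodal (hb.trans_le hv.1).ne') fun v hv => ?_
  rw [interior_Icc] at hv
  have hv₀ : 0 < v := hb.trans hv.1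
  exact div_pos (mul_pos (mul_pos (by positivity) (sub_pos.2 hv.1)) (sub_pos.2 hv.2))
    (by positivity)

theorem strictAntiOn_spinodal (ha : 0 < a) (hb : 0 < b) :
    StrictAntiOn (spinodal a b) (Ici (3 * b)) := by
  have h3b : 0 < 3 * b := by positivity
  refine strictAntiOn_of_forall_hasDerivAt_neg (convex_Ici _)
    (fun v hv => hasDerivAt_spinodal (h3b.trans_le hv).ne') fun v hv => ?_
  rw [interior_Ici, mem_Ioi] at hv
  have hv₀ : 0 < v := h3b.trans hv
  refine div_neg_of_neg_of_pos (mul_neg_of_pos_of_neg ?_ (by linarith)) (by positivity)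
  exact mul_pos (by positivity) (by linarith)

theorem spinodal_self : spinodal a b b = 0 := by
  simp [spinodal]

theorem spinodal_three_mul (hb : b ≠ 0) : spinodal a b (3 * b) = 8 * a / (27 * b) := by
  unfold spinodal
  field_simp
  ring

theorem lt_spinodal_three_mul {R θ : ℝ} (hb : 0 < b) (hR : 0 < R)
    (hθ : θ < 8 * a / (27 * R * b)) : R * θ < spinodal a b (3 * b) := by
  rw [spinodal_three_mul hb.ne']
  calc R * θ < R * (8 * a / (27 * R * b)) := mul_lt_mul_of_pos_left hθ hR
    _ = 8 * a / (27 * b) := by field_simp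

theorem spinodal_lt_div (ha : 0 < a) (hb : 0 < b) (hv : b ≤ v) : spinodal a b v < 2 * a / v := by
  have hv₀ : 0 < v := hb.trans_le hv
  unfold spinodal
  rw [div_lt_div_iff₀ (by positivity) hv₀]
  have : (v - b) ^ 2 < v ^ 2 := by nlinarith
  nlinarith [mul_lt_mul_of_pos_left this (by positivity : 0 < 2 * a * v)]

theorem exists_spinodal_lt (ha : 0 < a) (hb : 0 < b) (hc : 0 < c) :
    ∃ M, 3 * b ≤ M ∧ spinodal a b M < c := by
  have h2ac : 0 < 2 * a / c := by positivity
  refine ⟨3 * b + 2 * a / c, by linarith, (spinodal_lt_div ha hb (by linarith)).trans ?_⟩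
  rw [div_lt_iff₀ (by positivity), ← div_lt_iff₀' hc]
  linarith

end VanDerWaals

open VanDerWaals in
/-- Subcritical van der Waals isotherm: for `0 < θ < 8a/(27Rb)` there exist
`b < v_α < v_β` such that `∂p/∂v (v,θ) = 2a/v³ - Rθ/(v-b)²` is negative on
`(b, v_α)`, vanishes at `v_α` and `v_β`, is positive on `(v_α, v_β)` and
negative on `(v_β, ∞)`; consequently `v ↦ p(v,θ)` is strictly decreasing on
`(b, v_α]`, strictly increasing on `[v_α, v_β]`, and strictly decreasing on
`[v_β, ∞)`. -/
theorem vdw_subcritical_nonmonotone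
    (a b R θ : ℝ) (ha : 0 < a) (hb : 0 < b) (hR : 0 < R)
    (hθpos : 0 < θ) (hθ : θ < 8 * a / (27 * R * b)) :
    ∃ vα vβ : ℝ, b < vα ∧ vα < vβ ∧
      (∀ v ∈ Set.Ioo b vα, 2 * a / v ^ 3 - R * θ / (v - b) ^ 2 < 0) ∧
      2 * a / vα ^ 3 - R * θ / (vα - b) ^ 2 = 0 ∧
      2 * a / vβ ^ 3 - R * θ / (vβ - b) ^ 2 = 0 ∧
      (∀ v ∈ Set.Ioo vα vβ, 0 < 2 * a / v ^ 3 - R * θ / (v - b) ^ 2) ∧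
      (∀ v ∈ Set.Ioi vβ, 2 * a / v ^ 3 - R * θ / (v - b) ^ 2 < 0) ∧
      StrictAntiOn (fun v : ℝ => -a / v ^ 2 + R * θ / (v - b)) (Set.Ioc b vα) ∧
      StrictMonoOn (fun v : ℝ => -a / v ^ 2 + R * θ / (v - b)) (Set.Icc vα vβ) ∧
      StrictAntiOn (fun v : ℝ => -a / v ^ 2 + R * θ / (v - b)) (Set.Ici vβ) := by
  have hc : 0 < R * θ := mul_pos hR hθpos
  obtain ⟨M, h3bM, hM⟩ := exists_spinodal_lt ha hb hc
  obtain ⟨vα, vβ, hbα, hα3b, h3bβ, hα, hβ, hleft, hmid, hright⟩ :=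
    exists_two_crossings_of_strictMonoOn_of_strictAntiOn (by linarith) h3bM
      (continuousOn_spinodal hb) (strictMonoOn_spinodal ha hb) (strictAntiOn_spinodal ha hb)
      (spinodal_self (a := a) ▸ hc) (lt_spinodal_three_mul hb hR hθ) hM
  have hbβ : b < vβ := by linarith
  have hderiv : ∀ v ∈ Ioi b, HasDerivAt (fun v : ℝ => -a / v ^ 2 + R * θ / (v - b))
      (2 * a / v ^ 3 - R * θ / (v - b) ^ 2) v :=
    fun v hv => hasDerivAt_pressure (hb.trans hv).ne' (ne_of_gt hv)
  have hneg₁ := fun v (hv : v ∈ Ioo b vα) => pressure_deriv_neg hv.1 (hleft v hv)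
  have hpos := fun v (hv : v ∈ Ioo vα vβ) => pressure_deriv_pos (hbα.trans hv.1) (hmid v hv)
  have hneg₂ := fun v (hv : v ∈ Ioi vβ) => pressure_deriv_neg (hbβ.trans hv) (hright v hv)
  refine ⟨vα, vβ, hbα, hα3b.trans h3bβ, hneg₁, pressure_deriv_eq_zero hbα hα,
    pressure_deriv_eq_zero hbβ hβ, hpos, hneg₂, ?_, ?_, ?_⟩
  · exact strictAntiOn_of_forall_hasDerivAt_neg (convex_Ioc _ _)
      (fun v hv => hderiv v hv.1) (by rwa [interior_Ioc])
  · exact strictMonoOn_of_forall_hasDerivAt_pos (convex_Icc _ _)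
      (fun v hv => hderiv v (hbα.trans_le hv.1)) (by rwa [interior_Icc])
  · exact strictAntiOn_of_forall_hasDerivAt_neg (convex_Ici _)
      (fun v hv => hderiv v (hbβ.trans_le hv)) (by rwa [interior_Ici])
end

section
/- If θ ≥ 8a/(27Rb), then the map v ↦ p(v,θ) is strictly decreasing on (b, +∞). -/
/-!
At the critical temperature `θ_c = 8a/(27Rb)` the derivative
`∂p/∂v = 2a/v³ - Rθ/(v-b)²` is `-2a (v-3b)²(4v-3b) / (27 b v³ (v-b)²)`, which is `≤ 0` on `(b, ∞)`
and vanishes only at the critical volume `v = 3b`. Raising `θ` only lowers the derivative, and a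
derivative that is negative off a single point still forces strict monotonicity.
-/

open Set

theorem strictAntiOn_of_hasDerivAt_neg_of_ne {D : Set ℝ} (hD : Convex ℝ D) {f f' : ℝ → ℝ} {c : ℝ}
    (hf : ContinuousOn f D) (hf' : ∀ x ∈ interior D, HasDerivAt f (f' x) x)
    (hneg : ∀ x ∈ interior D, x ≠ c → f' x < 0) : StrictAntiOn f D := by
  have off_c : ∀ x ∈ D, ∀ y ∈ D, x < y → c ∉ Ioo x y → f y < f x := by
    intro x hx y hy hxy hc
    have hIcc : Icc x y ⊆ D := hD.ordConnected.out hx hy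
    have hIoo : Ioo x y ⊆ interior D := interior_Icc (a := x) (b := y) ▸ interior_mono hIcc
    refine strictAntiOn_of_hasDerivWithinAt_neg (f' := f') (convex_Icc x y) (hf.mono hIcc)
      (fun z hz => ?_) (fun z hz => ?_) (left_mem_Icc.2 hxy.le) (right_mem_Icc.2 hxy.le) hxy
    · rw [interior_Icc] at hz
      exact (hf' z (hIoo hz)).hasDerivWithinAt
    · rw [interior_Icc] at hz
      exact hneg z (hIoo hz) (ne_of_mem_of_not_mem hz hc)
  intro x hx y hy hxy
  by_cases hc : c ∈ Ioo x y
  · have hcD : c ∈ D := hD.ordConnected.out hx hy (Ioo_subset_Icc_self hc)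
    calc f y < f c := off_c c hcD y hy hc.2 (fun h => h.1.false)
      _ < f x := off_c x hx c hcD hc.1 (fun h => h.2.false)
  · exact off_c x hx y hy hxy hc

theorem twentySeven_mul_sub_sq_lt_four_mul_pow_three {b v : ℝ} (hb : 0 < b) (hv : b < v)
    (hv3 : v ≠ 3 * b) : 27 * b * (v - b) ^ 2 < 4 * v ^ 3 := by
  have hfactor : 4 * v ^ 3 - 27 * b * (v - b) ^ 2 = (v - 3 * b) ^ 2 * (4 * v - 3 * b) := by ring
  have hpos : 0 < (v - 3 * b) ^ 2 * (4 * v - 3 * b) :=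
    mul_pos (pow_two_pos_of_ne_zero (sub_ne_zero.2 hv3)) (by linarith)
  linarith

noncomputable def vdwPressure (a b R θ v : ℝ) : ℝ := -a / v ^ 2 + R * θ / (v - b)

theorem hasDerivAt_vdwPressure (a b R θ : ℝ) {v : ℝ} (hv : v ≠ 0) (hvb : v ≠ b) :
    HasDerivAt (vdwPressure a b R θ) (2 * a / v ^ 3 - R * θ / (v - b) ^ 2) v := by
  have hvb' : v - b ≠ 0 := sub_ne_zero.2 hvb
  have h1 := (hasDerivAt_const v (-a)).fun_div (hasDerivAt_pow 2 v) (pow_ne_zero 2 hv)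
  have h2 := (hasDerivAt_const v (R * θ)).fun_div ((hasDerivAt_id' v).sub_const b) hvb'
  refine (h1.fun_add h2).congr_deriv ?_
  field_simp
  ring

theorem vdwPressure_deriv_neg {a b R θ v : ℝ} (ha : 0 < a) (hb : 0 < b)
    (hθ : 8 * a / (27 * b) ≤ R * θ) (hv : b < v) (hv3 : v ≠ 3 * b) :
    2 * a / v ^ 3 - R * θ / (v - b) ^ 2 < 0 := by
  have hv0 : 0 < v := hb.trans hv
  have hvb : 0 < (v - b) ^ 2 := pow_pos (sub_pos.2 hv) 2
  have hcubic := twentySeven_mul_sub_sq_lt_four_mul_pow_three hb hv hv3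
  rw [sub_neg]
  calc 2 * a / v ^ 3 < 8 * a / (27 * b) / (v - b) ^ 2 := by
        rw [div_div, div_lt_div_iff₀ (by positivity) (by positivity)]
        linarith [mul_lt_mul_of_pos_left hcubic ha]
    _ ≤ R * θ / (v - b) ^ 2 := div_le_div_of_nonneg_right hθ hvb.le

theorem vdw_supercritical_strictAnti_general
    (a b R θ : ℝ) (ha : 0 < a) (hb : 0 < b) (hR : 0 < R)
    (hθ : 8 * a / (27 * R * b) ≤ θ) :
    StrictAntiOn (fun v : ℝ => -a / v ^ 2 + R * θ / (v - b)) (Set.Ioi b) := by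
  change StrictAntiOn (vdwPressure a b R θ) (Ioi b)
  have hRθ : 8 * a / (27 * b) ≤ R * θ := by
    rwa [mul_right_comm, ← div_div, div_le_iff₀ hR, mul_comm θ] at hθ
  have hderiv : ∀ v ∈ Ioi b,
      HasDerivAt (vdwPressure a b R θ) (2 * a / v ^ 3 - R * θ / (v - b) ^ 2) v := fun v hv =>
    hasDerivAt_vdwPressure a b R θ (hb.trans hv).ne' hv.ne'
  refine strictAntiOn_of_hasDerivAt_neg_of_ne (c := 3 * b) (convex_Ioi b)
    (fun v hv => (hderiv v hv).continuousAt.continuousWithinAt) (by rwa [interior_Ioi]) ?_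
  rw [interior_Ioi]
  exact fun v hv hv3 => vdwPressure_deriv_neg ha hb hRθ hv hv3

/-- Supercritical van der Waals isotherm: if `θ ≥ 8a/(27Rb)` then
`v ↦ p(v,θ) = -a/v² + Rθ/(v-b)` is strictly decreasing on `(b, ∞)`. -/
theorem vdw_supercritical_strictAnti
    (a b R θ : ℝ) (ha : 0 < a) (hb : 0 < b) (hR : 0 < R)
    (hθpos : 0 < θ) (hθ : 8 * a / (27 * R * b) ≤ θ) :
    StrictAntiOn (fun v : ℝ => -a / v ^ 2 + R * θ / (v - b)) (Set.Ioi b) :=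
  vdw_supercritical_strictAnti_general a b R θ ha hb hR hθ
end

section
/- Let ε > 0, β ≥ 0, and let (v, u, θ, χ, μ) be real-valued functions of (x,t) on an open subset U of ℝ², each of class C², with v > b and θ > 0 on U, satisfying pointwise on U the one-dimensional Lagrangian Navier–Stokes/Allen–Cahn system: v_t = u_x; u_t + (Rθ/(v−b) − a/v²)_x = (u_x/v)_x − (ε/2)(χ_x²/v²)_x; θ_t + (Rθ/(v−b))·u_x − (θ^β θ_x/v)_x = u_x²/v + v·μ²; χ_t = −v·μ; μ = (1/ε)(χ³ − χ) − ε·(χ_x/v)_x. Then the following entropy-energy identity holds pointwise on U: ∂_t[ u²/(2θ̄) + (χ² − 1)²/(4εθ̄) + ε·χ_x²/(2θ̄·v) + Φ(v) + Ψ(θ) ] + θ^β θ_x²/(v θ²) + u_x²/(v θ) + v μ²/θ = (1/θ̄)(Rθ̄/(v̄−b) − a/v̄²)·u_x + ∂_x[ (1/θ̄)( u·u_x/v − R·u·θ/(v−b) + a·u/v² ) + (1/θ̄ − 1/θ)·θ^β θ_x/v + (ε/θ̄)·χ_x χ_t/v − (ε/(2θ̄))·χ_x²·u/v² ]. -/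
/-- Partial derivative in the first (spatial) variable. -/
noncomputable def pdx (f : ℝ → ℝ → ℝ) (x t : ℝ) : ℝ := deriv (fun y => f y t) x

/-- Partial derivative in the second (time) variable. -/
noncomputable def pdt (f : ℝ → ℝ → ℝ) (x t : ℝ) : ℝ := deriv (fun s => f x s) t

/-- The energy function
`Φ(v) = (1/θ̄)[(Rθ̄/(v̄−b) − a/v̄²)(v − v̄) − (a/v − a/v̄) − Rθ̄ ln((v−b)/(v̄−b))]`. -/
noncomputable def PhiVdw (a b R vbar θbar v : ℝ) : ℝ :=
  (1 / θbar) * ((R * θbar / (vbar - b) - a / vbar ^ 2) * (v - vbar)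
    - (a / v - a / vbar) - R * θbar * Real.log ((v - b) / (vbar - b)))

/-- The entropy function `Ψ(θ) = (θ − θ̄)/θ̄ − ln(θ/θ̄)`. -/
noncomputable def PsiEnt (θbar θ : ℝ) : ℝ := (θ - θbar) / θbar - Real.log (θ / θbar)

/-!
Differentiate the density in `t` and the flux in `x` by the chain and product rules,
keeping the composite terms `u_x/v`, `Rθ/(v-b) - a/v²`, `θ^β θ_x/v`, `χ_x/v`, `χ_x²/v²`
of the system as atoms and using `χ_xt = χ_tx`; here `Φ'(v) = (p(v̄,θ̄) - p(v,θ̄))/θ̄`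
and `Ψ'(θ) = 1/θ̄ - 1/θ`. After substituting `v_t = u_x` and `χ_t = -vμ`, the identity
is `u/θ̄` times the momentum equation plus `1/θ̄ - 1/θ` times the energy equation plus
`vμ/θ̄` times the equation for `μ`.
-/

open Filter Topology

section PartialDerivatives

variable {f : ℝ → ℝ → ℝ} {x t : ℝ}

theorem hasDerivAt_fderiv_fst (hf : DifferentiableAt ℝ (fun p : ℝ × ℝ => f p.1 p.2) (x, t)) :
    HasDerivAt (fun y => f y t) (fderiv ℝ (fun p : ℝ × ℝ => f p.1 p.2) (x, t) (1, 0)) x :=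
  (hf.hasFDerivAt.comp_hasDerivAt x ((hasDerivAt_id x).prodMk (hasDerivAt_const x t)) :)

theorem hasDerivAt_fderiv_snd (hf : DifferentiableAt ℝ (fun p : ℝ × ℝ => f p.1 p.2) (x, t)) :
    HasDerivAt (fun s => f x s) (fderiv ℝ (fun p : ℝ × ℝ => f p.1 p.2) (x, t) (0, 1)) t :=
  (hf.hasFDerivAt.comp_hasDerivAt t ((hasDerivAt_const t x).prodMk (hasDerivAt_id t)) :)

theorem pdx_eq_fderiv (hf : DifferentiableAt ℝ (fun p : ℝ × ℝ => f p.1 p.2) (x, t)) :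
    pdx f x t = fderiv ℝ (fun p : ℝ × ℝ => f p.1 p.2) (x, t) (1, 0) :=
  (hasDerivAt_fderiv_fst hf).deriv

theorem pdt_eq_fderiv (hf : DifferentiableAt ℝ (fun p : ℝ × ℝ => f p.1 p.2) (x, t)) :
    pdt f x t = fderiv ℝ (fun p : ℝ × ℝ => f p.1 p.2) (x, t) (0, 1) :=
  (hasDerivAt_fderiv_snd hf).deriv

theorem hasDerivAt_pdx (hf : DifferentiableAt ℝ (fun p : ℝ × ℝ => f p.1 p.2) (x, t)) :
    HasDerivAt (fun y => f y t) (pdx f x t) x :=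
  pdx_eq_fderiv hf ▸ hasDerivAt_fderiv_fst hf

theorem hasDerivAt_pdt (hf : DifferentiableAt ℝ (fun p : ℝ × ℝ => f p.1 p.2) (x, t)) :
    HasDerivAt (fun s => f x s) (pdt f x t) t :=
  pdt_eq_fderiv hf ▸ hasDerivAt_fderiv_snd hf

theorem hasDerivAt_of_eventually_eq_fderiv_apply {E G : Type*} [NormedAddCommGroup E]
    [NormedSpace ℝ E] [NormedAddCommGroup G] [NormedSpace ℝ G] {F : E → G} {γ : ℝ → E}
    {g : E → G} {r : ℝ} {w d : E} (hF : ContDiffAt ℝ 2 F (γ r)) (hγ : HasDerivAt γ w r)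
    (hg : g =ᶠ[𝓝 (γ r)] fun q => fderiv ℝ F q d) :
    HasDerivAt (fun s => g (γ s)) (fderiv ℝ (fderiv ℝ F) (γ r) w d) r := by
  have hF' : HasFDerivAt (fderiv ℝ F) (fderiv ℝ (fderiv ℝ F) (γ r)) (γ r) :=
    ((hF.fderiv_right one_add_one_eq_two.le).differentiableAt one_ne_zero).hasFDerivAt
  have hcomp := (hF'.comp_hasDerivAt r hγ).clm_apply (hasDerivAt_const r d)
  simp only [map_zero, add_zero] at hcomp
  exact hcomp.congr_of_eventuallyEq (hγ.continuousAt.eventually hg)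

theorem eventually_pdx_eq_fderiv (hf : ContDiffAt ℝ 2 (fun p : ℝ × ℝ => f p.1 p.2) (x, t)) :
    (fun q : ℝ × ℝ => pdx f q.1 q.2)
      =ᶠ[𝓝 (x, t)] fun q => fderiv ℝ (fun p : ℝ × ℝ => f p.1 p.2) q (1, 0) :=
  (hf.eventually (by simp)).mono fun _ hq => pdx_eq_fderiv (hq.differentiableAt two_ne_zero)

theorem eventually_pdt_eq_fderiv (hf : ContDiffAt ℝ 2 (fun p : ℝ × ℝ => f p.1 p.2) (x, t)) :
    (fun q : ℝ × ℝ => pdt f q.1 q.2)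
      =ᶠ[𝓝 (x, t)] fun q => fderiv ℝ (fun p : ℝ × ℝ => f p.1 p.2) q (0, 1) :=
  (hf.eventually (by simp)).mono fun _ hq => pdt_eq_fderiv (hq.differentiableAt two_ne_zero)

theorem hasDerivAt_pdx_pdx (hf : ContDiffAt ℝ 2 (fun p : ℝ × ℝ => f p.1 p.2) (x, t)) :
    HasDerivAt (fun y => pdx f y t) (pdx (pdx f) x t) x :=
  (hasDerivAt_of_eventually_eq_fderiv_apply (γ := fun y => (y, t)) hf
    ((hasDerivAt_id x).prodMk (hasDerivAt_const x t)) (eventually_pdx_eq_fderiv hf)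
    ).differentiableAt.hasDerivAt

theorem hasDerivAt_pdx_pdt (hf : ContDiffAt ℝ 2 (fun p : ℝ × ℝ => f p.1 p.2) (x, t)) :
    HasDerivAt (fun y => pdt f y t) (pdx (pdt f) x t) x :=
  (hasDerivAt_of_eventually_eq_fderiv_apply (γ := fun y => (y, t)) hf
    ((hasDerivAt_id x).prodMk (hasDerivAt_const x t)) (eventually_pdt_eq_fderiv hf)
    ).differentiableAt.hasDerivAt

theorem hasDerivAt_pdt_pdx (hf : ContDiffAt ℝ 2 (fun p : ℝ × ℝ => f p.1 p.2) (x, t)) :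
    HasDerivAt (fun s => pdx f x s) (pdx (pdt f) x t) t := by
  have hx := hasDerivAt_of_eventually_eq_fderiv_apply (γ := fun y => (y, t)) hf
    ((hasDerivAt_id x).prodMk (hasDerivAt_const x t)) (eventually_pdt_eq_fderiv hf)
  have ht := hasDerivAt_of_eventually_eq_fderiv_apply (γ := fun s => (x, s)) hf
    ((hasDerivAt_const t x).prodMk (hasDerivAt_id t)) (eventually_pdx_eq_fderiv hf)
  rw [pdx, hx.deriv, (hf.isSymmSndFDerivAt (by simp)).eq]
  exact ht

end PartialDerivatives

theorem hasDerivAt_PhiVdw {a b R vbar θbar v : ℝ} (hv : v ≠ 0) (hvb : v ≠ b)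
    (hvbar : vbar ≠ b) :
    HasDerivAt (PhiVdw a b R vbar θbar)
      ((1 / θbar) * (R * θbar / (vbar - b) - a / vbar ^ 2
        - (R * θbar / (v - b) - a / v ^ 2))) v := by
  have hlog := (((hasDerivAt_id' v).sub_const b).div_const (vbar - b)).log
    (div_ne_zero (sub_ne_zero.2 hvb) (sub_ne_zero.2 hvbar))
  have h := ((((hasDerivAt_id' v).sub_const vbar).const_mul
    (R * θbar / (vbar - b) - a / vbar ^ 2)).sub
      (((hasDerivAt_const v a).div (hasDerivAt_id' v) hv).sub_const (a / vbar)) |>.sub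
      (hlog.const_mul (R * θbar))).const_mul (1 / θbar)
  refine h.congr_deriv ?_
  field_simp
  ring

theorem hasDerivAt_PsiEnt {θbar θ : ℝ} (hθ : θ ≠ 0) (hθbar : θbar ≠ 0) :
    HasDerivAt (PsiEnt θbar) (1 / θbar - 1 / θ) θ := by
  have h := (((hasDerivAt_id' θ).sub_const θbar).div_const θbar).sub
    (((hasDerivAt_id' θ).div_const θbar).log (div_ne_zero hθ hθbar))
  refine h.congr_deriv ?_
  field_simp

section EntropyEnergy

variable {a b R ε vbar θbar : ℝ} {v u θ χ : ℝ → ℝ → ℝ} {x t : ℝ}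

theorem pdt_entropyEnergyDensity
    (hv : DifferentiableAt ℝ (fun p : ℝ × ℝ => v p.1 p.2) (x, t))
    (hu : DifferentiableAt ℝ (fun p : ℝ × ℝ => u p.1 p.2) (x, t))
    (hθ : DifferentiableAt ℝ (fun p : ℝ × ℝ => θ p.1 p.2) (x, t))
    (hχ : ContDiffAt ℝ 2 (fun p : ℝ × ℝ => χ p.1 p.2) (x, t))
    (hv0 : v x t ≠ 0) (hvb : v x t ≠ b) (hθ0 : θ x t ≠ 0) (hvbar : vbar ≠ b)
    (hθbar : θbar ≠ 0) :
    pdt (fun x t =>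
        (u x t) ^ 2 / (2 * θbar)
        + ((χ x t) ^ 2 - 1) ^ 2 / (4 * ε * θbar)
        + ε * (pdx χ x t) ^ 2 / (2 * θbar * v x t)
        + PhiVdw a b R vbar θbar (v x t)
        + PsiEnt θbar (θ x t)) x t
      = u x t * pdt u x t / θbar
        + ((χ x t) ^ 3 - χ x t) * pdt χ x t / (ε * θbar)
        + ε * pdx χ x t * pdx (pdt χ) x t / (θbar * v x t)
        - ε * (pdx χ x t) ^ 2 * pdt v x t / (2 * θbar * (v x t) ^ 2)
        + (1 / θbar) * (R * θbar / (vbar - b) - a / vbar ^ 2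
            - (R * θbar / (v x t - b) - a / (v x t) ^ 2)) * pdt v x t
        + (1 / θbar - 1 / θ x t) * pdt θ x t := by
  have hvt := hasDerivAt_pdt hv
  have hχt := hasDerivAt_pdt (hχ.differentiableAt two_ne_zero)
  have h := (((((hasDerivAt_pdt hu).pow 2).div_const (2 * θbar)).add
    (((hχt.pow 2).sub_const 1).pow 2 |>.div_const (4 * ε * θbar))).add
    ((((hasDerivAt_pdt_pdx hχ).pow 2).const_mul ε).div (hvt.const_mul (2 * θbar))
      (mul_ne_zero (mul_ne_zero two_ne_zero hθbar) hv0))).add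
    ((hasDerivAt_PhiVdw (a := a) (R := R) (θbar := θbar) hv0 hvb hvbar).comp t hvt) |>.add
    ((hasDerivAt_PsiEnt hθ0 hθbar).comp t (hasDerivAt_pdt hθ))
  refine (h.congr_deriv ?_).deriv
  simp only [Pi.pow_apply]
  field_simp
  ring

theorem pdx_entropyEnergyFlux {β : ℝ}
    (hv : DifferentiableAt ℝ (fun p : ℝ × ℝ => v p.1 p.2) (x, t))
    (hu : ContDiffAt ℝ 2 (fun p : ℝ × ℝ => u p.1 p.2) (x, t))
    (hθ : ContDiffAt ℝ 2 (fun p : ℝ × ℝ => θ p.1 p.2) (x, t))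
    (hχ : ContDiffAt ℝ 2 (fun p : ℝ × ℝ => χ p.1 p.2) (x, t))
    (hv0 : v x t ≠ 0) (hvb : v x t ≠ b) (hθ0 : θ x t ≠ 0) :
    pdx (fun x t =>
        (1 / θbar) * (u x t * pdx u x t / v x t
          - R * u x t * θ x t / (v x t - b) + a * u x t / (v x t) ^ 2)
        + (1 / θbar - 1 / θ x t) * (θ x t) ^ β * pdx θ x t / v x t
        + (ε / θbar) * (pdx χ x t * pdt χ x t / v x t)
        - (ε / (2 * θbar)) * (pdx χ x t) ^ 2 * u x t / (v x t) ^ 2) x t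
      = (1 / θbar) * (pdx u x t * (pdx u x t / v x t)
            + u x t * pdx (fun x t => pdx u x t / v x t) x t
            - pdx u x t * (R * θ x t / (v x t - b) - a / (v x t) ^ 2)
            - u x t * pdx (fun x t => R * θ x t / (v x t - b) - a / (v x t) ^ 2) x t)
        + pdx θ x t / (θ x t) ^ 2 * ((θ x t) ^ β * pdx θ x t / v x t)
        + (1 / θbar - 1 / θ x t) * pdx (fun x t => (θ x t) ^ β * pdx θ x t / v x t) x t
        + (ε / θbar) * (pdx (fun x t => pdx χ x t / v x t) x t * pdt χ x t
            + pdx χ x t / v x t * pdx (pdt χ) x t)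
        - (ε / (2 * θbar)) * (pdx (fun x t => (pdx χ x t) ^ 2 / (v x t) ^ 2) x t * u x t
            + (pdx χ x t) ^ 2 / (v x t) ^ 2 * pdx u x t) := by
  have hvx := (hasDerivAt_pdx hv).differentiableAt
  have hux := hasDerivAt_pdx (hu.differentiableAt two_ne_zero)
  have hθx := hasDerivAt_pdx (hθ.differentiableAt two_ne_zero)
  have huxx := (hasDerivAt_pdx_pdx hu).differentiableAt
  have hθxx := (hasDerivAt_pdx_pdx hθ).differentiableAt
  have hχxx := (hasDerivAt_pdx_pdx hχ).differentiableAt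
  have hA : HasDerivAt (fun y => pdx u y t / v y t) (pdx (fun x t => pdx u x t / v x t) x t) x :=
    (huxx.div hvx hv0).hasDerivAt
  have hP : HasDerivAt (fun y => R * θ y t / (v y t - b) - a / (v y t) ^ 2)
      (pdx (fun x t => R * θ x t / (v x t - b) - a / (v x t) ^ 2) x t) x :=
    (((hθx.differentiableAt.const_mul R).div (hvx.sub_const b) (sub_ne_zero.2 hvb)).sub
      ((differentiableAt_const a).div (hvx.pow 2) (pow_ne_zero 2 hv0))).hasDerivAt
  have hQ : HasDerivAt (fun y => (θ y t) ^ β * pdx θ y t / v y t)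
      (pdx (fun x t => (θ x t) ^ β * pdx θ x t / v x t) x t) x :=
    (((hθx.differentiableAt.rpow_const (p := β) (Or.inl hθ0)).mul hθxx).div hvx hv0).hasDerivAt
  have hB : HasDerivAt (fun y => pdx χ y t / v y t) (pdx (fun x t => pdx χ x t / v x t) x t) x :=
    (hχxx.div hvx hv0).hasDerivAt
  have hC : HasDerivAt (fun y => (pdx χ y t) ^ 2 / (v y t) ^ 2)
      (pdx (fun x t => (pdx χ x t) ^ 2 / (v x t) ^ 2) x t) x :=
    ((hχxx.pow 2).div (hvx.pow 2) (pow_ne_zero 2 hv0)).hasDerivAt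
  have h := (((hux.mul hA).sub (hux.mul hP)).const_mul (1 / θbar)).add
    (((hasDerivAt_const x (1 / θbar)).sub ((hasDerivAt_const x 1).div hθx hθ0)).mul hQ) |>.add
    ((hB.mul (hasDerivAt_pdx_pdt hχ)).const_mul (ε / θbar)) |>.sub
    ((hC.mul hux).const_mul (ε / (2 * θbar)))
  -- regrouped so that the product rule produces the composite terms of the equations
  have hflux : (fun x t =>
        (1 / θbar) * (u x t * pdx u x t / v x t
          - R * u x t * θ x t / (v x t - b) + a * u x t / (v x t) ^ 2)
        + (1 / θbar - 1 / θ x t) * (θ x t) ^ β * pdx θ x t / v x t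
        + (ε / θbar) * (pdx χ x t * pdt χ x t / v x t)
        - (ε / (2 * θbar)) * (pdx χ x t) ^ 2 * u x t / (v x t) ^ 2)
      = fun x t =>
        (1 / θbar) * (u x t * (pdx u x t / v x t)
          - u x t * (R * θ x t / (v x t - b) - a / (v x t) ^ 2))
        + (1 / θbar - 1 / θ x t) * ((θ x t) ^ β * pdx θ x t / v x t)
        + (ε / θbar) * (pdx χ x t / v x t * pdt χ x t)
        - (ε / (2 * θbar)) * ((pdx χ x t) ^ 2 / (v x t) ^ 2 * u x t) := by
    funext x t
    ring
  rw [hflux]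
  refine (h.congr_deriv ?_).deriv
  simp only [Pi.sub_apply, Pi.div_apply]
  ring

end EntropyEnergy

theorem entropy_energy_identity_general
    (a b R ε β vbar θbar : ℝ)
    (hb : 0 < b) (hε : 0 < ε)
    (hvbar : b < vbar) (hθbar : 0 < θbar)
    (U : Set (ℝ × ℝ)) (hU : IsOpen U)
    (v u θ χ μ : ℝ → ℝ → ℝ)
    (hv : ContDiffOn ℝ 2 (fun p : ℝ × ℝ => v p.1 p.2) U)
    (hu : ContDiffOn ℝ 2 (fun p : ℝ × ℝ => u p.1 p.2) U)
    (hθ : ContDiffOn ℝ 2 (fun p : ℝ × ℝ => θ p.1 p.2) U)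
    (hχ : ContDiffOn ℝ 2 (fun p : ℝ × ℝ => χ p.1 p.2) U)
    (hvb : ∀ x t, (x, t) ∈ U → b < v x t)
    (hθpos : ∀ x t, (x, t) ∈ U → 0 < θ x t)
    (hmass : ∀ x t, (x, t) ∈ U → pdt v x t = pdx u x t)
    (hmom : ∀ x t, (x, t) ∈ U →
      pdt u x t
        + pdx (fun x t => R * θ x t / (v x t - b) - a / (v x t) ^ 2) x t
      = pdx (fun x t => pdx u x t / v x t) x t
        - (ε / 2) * pdx (fun x t => (pdx χ x t) ^ 2 / (v x t) ^ 2) x t)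
    (henergy : ∀ x t, (x, t) ∈ U →
      pdt θ x t + (R * θ x t / (v x t - b)) * pdx u x t
        - pdx (fun x t => (θ x t) ^ β * pdx θ x t / v x t) x t
      = (pdx u x t) ^ 2 / v x t + v x t * (μ x t) ^ 2)
    (hphase : ∀ x t, (x, t) ∈ U → pdt χ x t = -(v x t) * μ x t)
    (hpot : ∀ x t, (x, t) ∈ U →
      μ x t = (1 / ε) * ((χ x t) ^ 3 - χ x t)
        - ε * pdx (fun x t => pdx χ x t / v x t) x t) :
    ∀ x t, (x, t) ∈ U →
      pdt (fun x t =>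
          (u x t) ^ 2 / (2 * θbar)
          + ((χ x t) ^ 2 - 1) ^ 2 / (4 * ε * θbar)
          + ε * (pdx χ x t) ^ 2 / (2 * θbar * v x t)
          + PhiVdw a b R vbar θbar (v x t)
          + PsiEnt θbar (θ x t)) x t
        + (θ x t) ^ β * (pdx θ x t) ^ 2 / (v x t * (θ x t) ^ 2)
        + (pdx u x t) ^ 2 / (v x t * θ x t)
        + v x t * (μ x t) ^ 2 / θ x t
      = (1 / θbar) * (R * θbar / (vbar - b) - a / vbar ^ 2) * pdx u x t
        + pdx (fun x t =>
            (1 / θbar) * (u x t * pdx u x t / v x t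
              - R * u x t * θ x t / (v x t - b) + a * u x t / (v x t) ^ 2)
            + (1 / θbar - 1 / θ x t) * (θ x t) ^ β * pdx θ x t / v x t
            + (ε / θbar) * (pdx χ x t * pdt χ x t / v x t)
            - (ε / (2 * θbar)) * (pdx χ x t) ^ 2 * u x t / (v x t) ^ 2) x t := by
  intro x t hxt
  have hC2 {f : ℝ → ℝ → ℝ} (hf : ContDiffOn ℝ 2 (fun p : ℝ × ℝ => f p.1 p.2) U) :
      ContDiffAt ℝ 2 (fun p : ℝ × ℝ => f p.1 p.2) (x, t) :=
    hf.contDiffAt (hU.mem_nhds hxt)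
  have hbv := hvb x t hxt
  have hv0 : v x t ≠ 0 := (hb.trans hbv).ne'
  have hθ0 : θ x t ≠ 0 := (hθpos x t hxt).ne'
  have hv1 := (hC2 hv).differentiableAt two_ne_zero
  rw [pdt_entropyEnergyDensity hv1 ((hC2 hu).differentiableAt two_ne_zero)
      ((hC2 hθ).differentiableAt two_ne_zero) (hC2 hχ) hv0 hbv.ne' hθ0 hvbar.ne' hθbar.ne',
    pdx_entropyEnergyFlux hv1 (hC2 hu) (hC2 hθ) (hC2 hχ) hv0 hbv.ne' hθ0,
    hmass x t hxt, hphase x t hxt]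
  linear_combination (norm := skip) (u x t / θbar) * hmom x t hxt
    + (1 / θbar - 1 / θ x t) * henergy x t hxt + (v x t * μ x t / θbar) * hpot x t hxt
  field_simp
  ring

/-- Entropy-energy identity for the 1D Lagrangian compressible
Navier–Stokes/Allen–Cahn system with van der Waals pressure: for `C²`
functions `(v,u,θ,χ,μ)` on an open set `U ⊆ ℝ²` with `v > b`, `θ > 0`,
satisfying the five equations of the system, one has pointwise on `U`:
`∂_t[u²/(2θ̄) + (χ²−1)²/(4εθ̄) + εχ_x²/(2θ̄v) + Φ(v) + Ψ(θ)]
 + θ^β θ_x²/(vθ²) + u_x²/(vθ) + vμ²/θ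
 = (1/θ̄)(Rθ̄/(v̄−b) − a/v̄²)u_x
 + ∂_x[(1/θ̄)(u u_x/v − R u θ/(v−b) + a u/v²)
       + (1/θ̄ − 1/θ)θ^β θ_x/v + (ε/θ̄)χ_x χ_t/v − (ε/(2θ̄))χ_x² u/v²]`. -/
theorem entropy_energy_identity
    (a b R ε β vbar θbar : ℝ)
    (ha : 0 < a) (hb : 0 < b) (hR : 0 < R) (hε : 0 < ε) (hβ : 0 ≤ β)
    (hvbar : b < vbar) (hθbar : 0 < θbar)
    (U : Set (ℝ × ℝ)) (hU : IsOpen U)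
    (v u θ χ μ : ℝ → ℝ → ℝ)
    (hv : ContDiffOn ℝ 2 (fun p : ℝ × ℝ => v p.1 p.2) U)
    (hu : ContDiffOn ℝ 2 (fun p : ℝ × ℝ => u p.1 p.2) U)
    (hθ : ContDiffOn ℝ 2 (fun p : ℝ × ℝ => θ p.1 p.2) U)
    (hχ : ContDiffOn ℝ 2 (fun p : ℝ × ℝ => χ p.1 p.2) U)
    (hμ : ContDiffOn ℝ 2 (fun p : ℝ × ℝ => μ p.1 p.2) U)
    (hvb : ∀ x t, (x, t) ∈ U → b < v x t)
    (hθpos : ∀ x t, (x, t) ∈ U → 0 < θ x t)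
    (hmass : ∀ x t, (x, t) ∈ U → pdt v x t = pdx u x t)
    (hmom : ∀ x t, (x, t) ∈ U →
      pdt u x t
        + pdx (fun x t => R * θ x t / (v x t - b) - a / (v x t) ^ 2) x t
      = pdx (fun x t => pdx u x t / v x t) x t
        - (ε / 2) * pdx (fun x t => (pdx χ x t) ^ 2 / (v x t) ^ 2) x t)
    (henergy : ∀ x t, (x, t) ∈ U →
      pdt θ x t + (R * θ x t / (v x t - b)) * pdx u x t
        - pdx (fun x t => (θ x t) ^ β * pdx θ x t / v x t) x t
      = (pdx u x t) ^ 2 / v x t + v x t * (μ x t) ^ 2)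
    (hphase : ∀ x t, (x, t) ∈ U → pdt χ x t = -(v x t) * μ x t)
    (hpot : ∀ x t, (x, t) ∈ U →
      μ x t = (1 / ε) * ((χ x t) ^ 3 - χ x t)
        - ε * pdx (fun x t => pdx χ x t / v x t) x t) :
    ∀ x t, (x, t) ∈ U →
      pdt (fun x t =>
          (u x t) ^ 2 / (2 * θbar)
          + ((χ x t) ^ 2 - 1) ^ 2 / (4 * ε * θbar)
          + ε * (pdx χ x t) ^ 2 / (2 * θbar * v x t)
          + PhiVdw a b R vbar θbar (v x t)
          + PsiEnt θbar (θ x t)) x t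
        + (θ x t) ^ β * (pdx θ x t) ^ 2 / (v x t * (θ x t) ^ 2)
        + (pdx u x t) ^ 2 / (v x t * θ x t)
        + v x t * (μ x t) ^ 2 / θ x t
      = (1 / θbar) * (R * θbar / (vbar - b) - a / vbar ^ 2) * pdx u x t
        + pdx (fun x t =>
            (1 / θbar) * (u x t * pdx u x t / v x t
              - R * u x t * θ x t / (v x t - b) + a * u x t / (v x t) ^ 2)
            + (1 / θbar - 1 / θ x t) * (θ x t) ^ β * pdx θ x t / v x t
            + (ε / θbar) * (pdx χ x t * pdt χ x t / v x t)
            - (ε / (2 * θbar)) * (pdx χ x t) ^ 2 * u x t / (v x t) ^ 2) x t :=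
  entropy_energy_identity_general a b R ε β vbar θbar hb hε hvbar hθbar U hU v u θ χ μ hv hu hθ hχ
    hvb hθpos hmass hmom henergy hphase hpot
end

section
/- Let ε > 0, T > 0, and let (v, u, θ, χ) be real-valued C² functions on ℝ × [0,T] with v > b and θ > 0, satisfying pointwise v_t = u_x and u_t + (Rθ/(v−b) − a/v²)_x = (u_x/v)_x − (ε/2)(χ_x²/v²)_x. Define B(x,t) = −a/v(x,t)² + Rθ(x,t)/(v(x,t)−b) + (ε/2)·χ_x(x,t)²/v(x,t)². Then for all (x,t) ∈ ℝ × [0,T]: v(x,t) = D(x,t)·Y(t)·exp( ∫₀ᵗ B(x,s) ds ), where D(x,t) = v(x,0)·exp( ∫₀ˣ (u(y,t) − u(y,0)) dy ) and Y(t) = ( v(0,t)/v(0,0) )·exp( −∫₀ᵗ B(0,s) ds ). -/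
/-!
Write `B` for the effective pressure and `σ = uₓ/v − B` for the effective viscous flux. The mass
equation says `(log v)ₜ = uₓ/v = σ + B`, and the momentum equation says exactly `σₓ = uₜ`.
Integrating the first in time gives
`log v(x,t) − log v(x,0) = ∫₀ᵗ σ(x,s) ds + ∫₀ᵗ B(x,s) ds`; integrating the second over
`[0,x] × [0,t]` and exchanging the order of integration gives
`∫₀ᵗ σ(x,s) ds − ∫₀ᵗ σ(0,s) ds = ∫₀ˣ (u(y,t) − u(y,0)) dy`. Subtracting the first identity at
`x = 0` from the one at `x` and exponentiating gives the formula.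
-/

open Set Function Topology MeasureTheory

theorem ContinuousOn.curry_left {g : ℝ → ℝ → ℝ} {S S' : Set ℝ} {t : ℝ}
    (hg : ContinuousOn (uncurry g) (S ×ˢ S')) (ht : t ∈ S') : ContinuousOn (fun y => g y t) S :=
  hg.comp (continuous_id.prodMk continuous_const).continuousOn fun _ hy => ⟨hy, ht⟩

theorem ContinuousOn.curry_right {g : ℝ → ℝ → ℝ} {S S' : Set ℝ} {x : ℝ}
    (hg : ContinuousOn (uncurry g) (S ×ˢ S')) (hx : x ∈ S) : ContinuousOn (g x) S' :=
  hg.comp (continuous_const.prodMk continuous_id).continuousOn fun _ ht => ⟨hx, ht⟩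

section StripRegularity

variable {s : Set ℝ} {f : ℝ → ℝ → ℝ} {n : WithTop ℕ∞} {x t : ℝ}

/-- At an endpoint of `s`, `pdt f x t` depends on values of `f` off the strip; the derivative
within the strip agrees with it at interior times and is continuous up to the boundary. -/
noncomputable def pdtWithin (s : Set ℝ) (f : ℝ → ℝ → ℝ) (x t : ℝ) : ℝ :=
  fderivWithin ℝ (uncurry f) (univ ×ˢ s) (x, t) (0, 1)

theorem ContDiffOn.contDiff_curry_left (hf : ContDiffOn ℝ n (uncurry f) (univ ×ˢ s))
    (ht : t ∈ s) : ContDiff ℝ n fun y => f y t := by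
  rw [← contDiffOn_univ]
  exact hf.comp (contDiff_id.prodMk contDiff_const).contDiffOn fun _ _ => ⟨trivial, ht⟩

theorem ContDiffOn.differentiable_pdx (hf : ContDiffOn ℝ n (uncurry f) (univ ×ˢ s))
    (hn : 2 ≤ n) (ht : t ∈ s) : Differentiable ℝ fun y => pdx f y t :=
  ((hf.contDiff_curry_left ht).of_le hn).differentiable_deriv_two

theorem pdx_eq_fderivWithin (hf : DifferentiableWithinAt ℝ (uncurry f) (univ ×ˢ s) (x, t))
    (ht : t ∈ s) : pdx f x t = fderivWithin ℝ (uncurry f) (univ ×ˢ s) (x, t) (1, 0) := by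
  have hι : HasFDerivWithinAt (fun y : ℝ => (y, t)) (ContinuousLinearMap.inl ℝ ℝ ℝ) univ x :=
    (hasFDerivAt_prodMk_left x t).hasFDerivWithinAt
  have h := hf.hasFDerivWithinAt.comp x hι fun _ _ => mk_mem_prod trivial ht
  rw [hasFDerivWithinAt_univ] at h
  exact h.hasDerivAt.deriv

theorem ContDiffOn.continuousOn_pdx (hf : ContDiffOn ℝ n (uncurry f) (univ ×ˢ s))
    (hn : 1 ≤ n) (hs : UniqueDiffOn ℝ s) : ContinuousOn (uncurry (pdx f)) (univ ×ˢ s) := by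
  refine ((hf.continuousOn_fderivWithin (uniqueDiffOn_univ.prod hs) hn).clm_apply
    (continuousOn_const (c := ((1 : ℝ), (0 : ℝ))))).congr fun p hp => ?_
  exact pdx_eq_fderivWithin ((hf.differentiableOn (zero_lt_one.trans_le hn).ne') p hp) hp.2

theorem ContDiffOn.continuousOn_pdtWithin (hf : ContDiffOn ℝ n (uncurry f) (univ ×ˢ s))
    (hn : 1 ≤ n) (hs : UniqueDiffOn ℝ s) : ContinuousOn (uncurry (pdtWithin s f)) (univ ×ˢ s) :=
  (hf.continuousOn_fderivWithin (uniqueDiffOn_univ.prod hs) hn).clm_apply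
    (continuousOn_const (c := ((0 : ℝ), (1 : ℝ))))

theorem ContDiffOn.hasDerivAt_pdtWithin (hf : ContDiffOn ℝ n (uncurry f) (univ ×ˢ s))
    (hn : 1 ≤ n) (ht : s ∈ 𝓝 t) : HasDerivAt (f x) (pdtWithin s f x t) t := by
  have hst : univ ×ˢ s ∈ 𝓝 (x, t) := prod_mem_nhds Filter.univ_mem ht
  have hd : HasFDerivAt (uncurry f) (fderiv ℝ (uncurry f) (x, t)) (x, t) :=
    ((hf.contDiffAt hst).differentiableAt (zero_lt_one.trans_le hn).ne').hasFDerivAt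
  rw [pdtWithin, fderivWithin_of_mem_nhds hst]
  exact (hd.comp t (hasFDerivAt_prodMk_right x t)).hasDerivAt

theorem ContDiffOn.pdt_eq_pdtWithin (hf : ContDiffOn ℝ n (uncurry f) (univ ×ˢ s))
    (hn : 1 ≤ n) (ht : s ∈ 𝓝 t) : pdt f x t = pdtWithin s f x t :=
  (hf.hasDerivAt_pdtWithin hn ht).deriv

theorem ContDiffOn.hasDerivAt_pdt (hf : ContDiffOn ℝ n (uncurry f) (univ ×ˢ s))
    (hn : 1 ≤ n) (ht : s ∈ 𝓝 t) : HasDerivAt (f x) (pdt f x t) t :=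
  (hf.hasDerivAt_pdtWithin hn ht).differentiableAt.hasDerivAt

end StripRegularity

theorem integral_deriv_div_eq_log_sub_log {g g' : ℝ → ℝ} {a b : ℝ} (hab : a ≤ b)
    (hg : ContinuousOn g (Icc a b)) (hg0 : ∀ s ∈ Icc a b, g s ≠ 0)
    (hderiv : ∀ s ∈ Ioo a b, HasDerivAt g (g' s) s)
    (hint : IntervalIntegrable (fun s => g' s / g s) volume a b) :
    ∫ s in a..b, g' s / g s = Real.log (g b) - Real.log (g a) :=
  intervalIntegral.integral_eq_sub_of_hasDeriv_right_of_le hab (hg.log hg0)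
    (fun s hs => ((hderiv s hs).log (hg0 s (Ioo_subset_Icc_self hs))).hasDerivWithinAt) hint

theorem integral_sub_integral_eq_integral_sub_of_hasDerivAt {σ u w : ℝ → ℝ → ℝ} {a b c d : ℝ}
    (hcd : c ≤ d) (hw : ContinuousOn (uncurry w) (uIcc a b ×ˢ Icc c d))
    (hσ : ∀ s ∈ Ioo c d, ∀ y ∈ uIcc a b, HasDerivAt (fun z => σ z s) (w y s) y)
    (hu : ∀ y ∈ uIcc a b, ContinuousOn (u y) (Icc c d))
    (hut : ∀ y ∈ uIcc a b, ∀ s ∈ Ioo c d, HasDerivAt (u y) (w y s) s)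
    (hσa : IntervalIntegrable (σ a) volume c d) (hσb : IntervalIntegrable (σ b) volume c d) :
    (∫ s in c..d, σ b s) - ∫ s in c..d, σ a s = ∫ y in a..b, (u y d - u y c) := by
  rw [← intervalIntegral.integral_sub hσb hσa]
  calc ∫ s in c..d, (σ b s - σ a s) = ∫ s in c..d, ∫ y in a..b, w y s := by
        refine intervalIntegral.integral_congr_ae ?_
        filter_upwards [Measure.ae_ne volume d] with s hsd hs
        rw [uIoc_of_le hcd] at hs
        have hs' : s ∈ Ioo c d := ⟨hs.1, hs.2.lt_of_ne hsd⟩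
        exact (intervalIntegral.integral_eq_sub_of_hasDerivAt (hσ s hs')
          ((hw.curry_left (Ioo_subset_Icc_self hs')).intervalIntegrable)).symm
    _ = ∫ y in a..b, ∫ s in c..d, w y s := by
        refine (intervalIntegral_intervalIntegral_swap ?_).symm
        refine (hw.integrableOn_compact (μ := volume)
          (isCompact_uIcc.prod isCompact_Icc)).mono_set ?_
        rw [uIoc_of_le hcd]
        exact prod_mono uIoc_subset_uIcc Ioc_subset_Icc_self
    _ = ∫ y in a..b, (u y d - u y c) := by
        refine intervalIntegral.integral_congr fun y hy => ?_
        refine intervalIntegral.integral_eq_sub_of_hasDeriv_right_of_le hcd (hu y hy)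
          (fun s hs => (hut y hy s hs).hasDerivWithinAt) ?_
        exact (hw.curry_right hy).intervalIntegrable_of_Icc hcd

section NavierStokesAllenCahn

variable {a b R ε T : ℝ} {v u θ χ : ℝ → ℝ → ℝ}

noncomputable def effectivePressure (a b R ε : ℝ) (v θ χ : ℝ → ℝ → ℝ) (x t : ℝ) : ℝ :=
  -a / (v x t) ^ 2 + R * θ x t / (v x t - b) + (ε / 2) * (pdx χ x t) ^ 2 / (v x t) ^ 2

noncomputable def effectiveViscousFlux (a b R ε : ℝ) (v u θ χ : ℝ → ℝ → ℝ) (x t : ℝ) : ℝ :=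
  pdx u x t / v x t - effectivePressure a b R ε v θ χ x t

theorem continuousOn_effectivePressure {S : Set (ℝ × ℝ)} (hv : ContinuousOn (uncurry v) S)
    (hθ : ContinuousOn (uncurry θ) S) (hχ : ContinuousOn (uncurry (pdx χ)) S)
    (hv0 : ∀ p ∈ S, v p.1 p.2 ≠ 0) (hvb : ∀ p ∈ S, v p.1 p.2 ≠ b) :
    ContinuousOn (uncurry (effectivePressure a b R ε v θ χ)) S := by
  have hv2 : ∀ p ∈ S, v p.1 p.2 ^ 2 ≠ 0 := fun p hp => pow_ne_zero 2 (hv0 p hp)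
  exact ((continuousOn_const.div (hv.pow 2) hv2).add ((continuousOn_const.mul hθ).div
    (hv.sub continuousOn_const) fun p hp => sub_ne_zero.mpr (hvb p hp))).add
    ((continuousOn_const.mul (hχ.pow 2)).div (hv.pow 2) hv2)

theorem continuousOn_effectiveViscousFlux {S : Set (ℝ × ℝ)} (hv : ContinuousOn (uncurry v) S)
    (hu : ContinuousOn (uncurry (pdx u)) S) (hθ : ContinuousOn (uncurry θ) S)
    (hχ : ContinuousOn (uncurry (pdx χ)) S) (hv0 : ∀ p ∈ S, v p.1 p.2 ≠ 0)
    (hvb : ∀ p ∈ S, v p.1 p.2 ≠ b) :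
    ContinuousOn (uncurry (effectiveViscousFlux a b R ε v u θ χ)) S :=
  (hu.div hv hv0).sub (continuousOn_effectivePressure hv hθ hχ hv0 hvb)

theorem hasDerivAt_effectiveViscousFlux {y t : ℝ}
    (hv : DifferentiableAt ℝ (fun z => v z t) y) (hu : DifferentiableAt ℝ (fun z => pdx u z t) y)
    (hθ : DifferentiableAt ℝ (fun z => θ z t) y) (hχ : DifferentiableAt ℝ (fun z => pdx χ z t) y)
    (hv0 : v y t ≠ 0) (hvb : v y t ≠ b)
    (hmom : pdt u y t + pdx (fun x t => R * θ x t / (v x t - b) - a / (v x t) ^ 2) y t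
      = pdx (fun x t => pdx u x t / v x t) y t
        - (ε / 2) * pdx (fun x t => (pdx χ x t) ^ 2 / (v x t) ^ 2) y t) :
    HasDerivAt (fun z => effectiveViscousFlux a b R ε v u θ χ z t) (pdt u y t) y := by
  have hv2 : v y t ^ 2 ≠ 0 := pow_ne_zero 2 hv0
  have hdiv : HasDerivAt (fun z => pdx u z t / v z t)
      (pdx (fun x t => pdx u x t / v x t) y t) y := (hu.div hv hv0).hasDerivAt
  have hp : HasDerivAt (fun z => R * θ z t / (v z t - b) - a / (v z t) ^ 2)
      (pdx (fun x t => R * θ x t / (v x t - b) - a / (v x t) ^ 2) y t) y :=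
    (((differentiableAt_const R).mul hθ).div (hv.sub (differentiableAt_const b))
      (sub_ne_zero.mpr hvb)).sub ((differentiableAt_const a).div (hv.pow 2) hv2) |>.hasDerivAt
  have hcap : HasDerivAt (fun z => (pdx χ z t) ^ 2 / (v z t) ^ 2)
      (pdx (fun x t => (pdx χ x t) ^ 2 / (v x t) ^ 2) y t) y :=
    ((hχ.pow 2).div (hv.pow 2) hv2).hasDerivAt
  have hflux : (fun z => effectiveViscousFlux a b R ε v u θ χ z t) = fun z =>
      pdx u z t / v z t - (R * θ z t / (v z t - b) - a / (v z t) ^ 2)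
        - ε / 2 * ((pdx χ z t) ^ 2 / (v z t) ^ 2) := by
    funext z
    simp only [effectiveViscousFlux, effectivePressure]
    ring
  rw [hflux]
  exact ((hdiv.sub hp).sub (hcap.const_mul (ε / 2))).congr_deriv (by linarith)

theorem log_sub_log_eq_integral_of_mass {t : ℝ} (hT : 0 < T)
    (hv : ContDiffOn ℝ 1 (uncurry v) (univ ×ˢ Icc 0 T))
    (hu : ContDiffOn ℝ 1 (uncurry u) (univ ×ˢ Icc 0 T))
    (hv0 : ∀ x : ℝ, ∀ t ∈ Icc 0 T, v x t ≠ 0)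
    (hmass : ∀ x : ℝ, ∀ t ∈ Icc 0 T, pdt v x t = pdx u x t) (ht : t ∈ Icc 0 T) (x : ℝ) :
    Real.log (v x t) - Real.log (v x 0) = ∫ s in 0..t, pdx u x s / v x s := by
  have hsub : Icc 0 t ⊆ Icc 0 T := Icc_subset_Icc_right ht.2
  have hvx : ContinuousOn (v x) (Icc 0 t) := (hv.continuousOn.curry_right trivial).mono hsub
  refine (integral_deriv_div_eq_log_sub_log ht.1 hvx (fun s hs => hv0 x s (hsub hs))
    (fun s hs => ?_) ?_).symm
  · have hs' : Icc 0 T ∈ 𝓝 s := Icc_mem_nhds hs.1 (hs.2.trans_le ht.2)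
    exact hmass x s (hsub (Ioo_subset_Icc_self hs)) ▸ hv.hasDerivAt_pdt le_rfl hs'
  · refine ContinuousOn.intervalIntegrable_of_Icc ht.1 ?_
    exact (((hu.continuousOn_pdx le_rfl (uniqueDiffOn_Icc hT)).curry_right trivial).mono hsub).div
      hvx fun s hs => hv0 x s (hsub hs)

theorem log_sub_log_eq_integral_flux_add_integral_pressure {t : ℝ} (hT : 0 < T)
    (hv : ContDiffOn ℝ 1 (uncurry v) (univ ×ˢ Icc 0 T))
    (hu : ContDiffOn ℝ 1 (uncurry u) (univ ×ˢ Icc 0 T))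
    (hθ : ContDiffOn ℝ 1 (uncurry θ) (univ ×ˢ Icc 0 T))
    (hχ : ContDiffOn ℝ 1 (uncurry χ) (univ ×ˢ Icc 0 T))
    (hv0 : ∀ x : ℝ, ∀ t ∈ Icc 0 T, v x t ≠ 0) (hvb : ∀ x : ℝ, ∀ t ∈ Icc 0 T, v x t ≠ b)
    (hmass : ∀ x : ℝ, ∀ t ∈ Icc 0 T, pdt v x t = pdx u x t) (ht : t ∈ Icc 0 T) (x : ℝ) :
    Real.log (v x t) - Real.log (v x 0)
      = (∫ s in 0..t, effectiveViscousFlux a b R ε v u θ χ x s)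
        + ∫ s in 0..t, effectivePressure a b R ε v θ χ x s := by
  have hUD : UniqueDiffOn ℝ (Icc 0 T) := uniqueDiffOn_Icc hT
  have hint : ∀ {g : ℝ → ℝ → ℝ}, ContinuousOn (uncurry g) (univ ×ˢ Icc 0 T) →
      IntervalIntegrable (g x) volume 0 t := fun hg =>
    ((hg.curry_right trivial).mono (Icc_subset_Icc_right ht.2)).intervalIntegrable_of_Icc ht.1
  have hP := continuousOn_effectivePressure (a := a) (R := R) (ε := ε) hv.continuousOn
    hθ.continuousOn (hχ.continuousOn_pdx le_rfl hUD) (fun p hp => hv0 p.1 p.2 hp.2)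
    (fun p hp => hvb p.1 p.2 hp.2)
  have hF := continuousOn_effectiveViscousFlux (a := a) (R := R) (ε := ε) hv.continuousOn
    (hu.continuousOn_pdx le_rfl hUD) hθ.continuousOn (hχ.continuousOn_pdx le_rfl hUD)
    (fun p hp => hv0 p.1 p.2 hp.2) (fun p hp => hvb p.1 p.2 hp.2)
  rw [log_sub_log_eq_integral_of_mass hT hv hu hv0 hmass ht x,
    ← intervalIntegral.integral_add (hint hF) (hint hP)]
  simp only [effectiveViscousFlux, sub_add_cancel]

theorem integral_effectiveViscousFlux_sub_eq_integral_sub {t : ℝ} (hT : 0 < T)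
    (hv : ContDiffOn ℝ 2 (uncurry v) (univ ×ˢ Icc 0 T))
    (hu : ContDiffOn ℝ 2 (uncurry u) (univ ×ˢ Icc 0 T))
    (hθ : ContDiffOn ℝ 1 (uncurry θ) (univ ×ˢ Icc 0 T))
    (hχ : ContDiffOn ℝ 2 (uncurry χ) (univ ×ˢ Icc 0 T))
    (hv0 : ∀ x : ℝ, ∀ t ∈ Icc 0 T, v x t ≠ 0) (hvb : ∀ x : ℝ, ∀ t ∈ Icc 0 T, v x t ≠ b)
    (hmom : ∀ x : ℝ, ∀ t ∈ Icc 0 T,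
      pdt u x t + pdx (fun x t => R * θ x t / (v x t - b) - a / (v x t) ^ 2) x t
        = pdx (fun x t => pdx u x t / v x t) x t
          - (ε / 2) * pdx (fun x t => (pdx χ x t) ^ 2 / (v x t) ^ 2) x t)
    (ht : t ∈ Icc 0 T) (x : ℝ) :
    (∫ s in 0..t, effectiveViscousFlux a b R ε v u θ χ x s)
      - ∫ s in 0..t, effectiveViscousFlux a b R ε v u θ χ 0 s
      = ∫ y in 0..x, (u y t - u y 0) := by
  have hUD : UniqueDiffOn ℝ (Icc 0 T) := uniqueDiffOn_Icc hT
  have hsub : Icc 0 t ⊆ Icc 0 T := Icc_subset_Icc_right ht.2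
  have hnhds : ∀ s ∈ Ioo 0 t, Icc 0 T ∈ 𝓝 s := fun s hs => Icc_mem_nhds hs.1 (hs.2.trans_le ht.2)
  have hflux := continuousOn_effectiveViscousFlux (a := a) (R := R) (ε := ε) hv.continuousOn
    (hu.continuousOn_pdx one_le_two hUD) hθ.continuousOn (hχ.continuousOn_pdx one_le_two hUD)
    (fun p hp => hv0 p.1 p.2 hp.2) (fun p hp => hvb p.1 p.2 hp.2)
  refine integral_sub_integral_eq_integral_sub_of_hasDerivAt ht.1
    ((hu.continuousOn_pdtWithin one_le_two hUD).mono (prod_mono (subset_univ _) hsub))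
    (fun s hs y _ => ?_) (fun y _ => (hu.continuousOn.curry_right trivial).mono hsub)
    (fun y _ s hs => hu.hasDerivAt_pdtWithin one_le_two (hnhds s hs))
    (((hflux.curry_right trivial).mono hsub).intervalIntegrable_of_Icc ht.1)
    (((hflux.curry_right trivial).mono hsub).intervalIntegrable_of_Icc ht.1)
  have hs' : s ∈ Icc 0 T := hsub (Ioo_subset_Icc_self hs)
  rw [← hu.pdt_eq_pdtWithin one_le_two (hnhds s hs)]
  exact hasDerivAt_effectiveViscousFlux ((hv.contDiff_curry_left hs').differentiable two_ne_zero y)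
    (hu.differentiable_pdx le_rfl hs' y)
    ((hθ.contDiff_curry_left hs').differentiable one_ne_zero y)
    (hχ.differentiable_pdx le_rfl hs' y) (hv0 y s hs') (hvb y s hs') (hmom y s hs')

end NavierStokesAllenCahn

theorem kazhikhov_volume_representation_general
    (a b R ε T : ℝ)
    (hb : 0 < b) (hT : 0 < T)
    (v u θ χ : ℝ → ℝ → ℝ)
    (hv : ContDiffOn ℝ 2 (fun p : ℝ × ℝ => v p.1 p.2) (Set.univ ×ˢ Set.Icc 0 T))
    (hu : ContDiffOn ℝ 2 (fun p : ℝ × ℝ => u p.1 p.2) (Set.univ ×ˢ Set.Icc 0 T))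
    (hθ : ContDiffOn ℝ 2 (fun p : ℝ × ℝ => θ p.1 p.2) (Set.univ ×ˢ Set.Icc 0 T))
    (hχ : ContDiffOn ℝ 2 (fun p : ℝ × ℝ => χ p.1 p.2) (Set.univ ×ˢ Set.Icc 0 T))
    (hvb : ∀ x : ℝ, ∀ t ∈ Set.Icc 0 T, b < v x t)
    (hmass : ∀ x : ℝ, ∀ t ∈ Set.Icc 0 T, pdt v x t = pdx u x t)
    (hmom : ∀ x : ℝ, ∀ t ∈ Set.Icc 0 T,
      pdt u x t
        + pdx (fun x t => R * θ x t / (v x t - b) - a / (v x t) ^ 2) x t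
      = pdx (fun x t => pdx u x t / v x t) x t
        - (ε / 2) * pdx (fun x t => (pdx χ x t) ^ 2 / (v x t) ^ 2) x t) :
    ∀ x : ℝ, ∀ t ∈ Set.Icc 0 T,
      v x t =
        (v x 0 * Real.exp (∫ y in (0:ℝ)..x, (u y t - u y 0)))
        * ((v 0 t / v 0 0) * Real.exp
            (-∫ s in (0:ℝ)..t,
              (-a / (v 0 s) ^ 2 + R * θ 0 s / (v 0 s - b)
                + (ε / 2) * (pdx χ 0 s) ^ 2 / (v 0 s) ^ 2)))
        * Real.exp
            (∫ s in (0:ℝ)..t,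
              (-a / (v x s) ^ 2 + R * θ x s / (v x s - b)
                + (ε / 2) * (pdx χ x s) ^ 2 / (v x s) ^ 2)) := by
  intro x t ht
  have hpos : ∀ x : ℝ, ∀ t ∈ Icc 0 T, 0 < v x t := fun x t ht => hb.trans (hvb x t ht)
  have hv0 : ∀ x : ℝ, ∀ t ∈ Icc 0 T, v x t ≠ 0 := fun x t ht => (hpos x t ht).ne'
  have hvb' : ∀ x : ℝ, ∀ t ∈ Icc 0 T, v x t ≠ b := fun x t ht => (hvb x t ht).ne'
  have hlog := log_sub_log_eq_integral_flux_add_integral_pressure (a := a) (R := R) (ε := ε) hT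
    (hv.of_le one_le_two) (hu.of_le one_le_two) (hθ.of_le one_le_two) (hχ.of_le one_le_two)
    hv0 hvb' hmass ht
  have hflux := integral_effectiveViscousFlux_sub_eq_integral_sub hT hv hu (hθ.of_le one_le_two)
    hχ hv0 hvb' hmom ht x
  have h0T : (0 : ℝ) ∈ Icc 0 T := left_mem_Icc.mpr hT.le
  rw [← Real.exp_log (hpos x t ht), ← Real.exp_log (hpos x 0 h0T), ← Real.exp_log (hpos 0 t ht),
    ← Real.exp_log (hpos 0 0 h0T), ← Real.exp_sub, ← Real.exp_add, ← Real.exp_add, ← Real.exp_add,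
    ← Real.exp_add]
  congr 1
  -- the integrands of the goal are `effectivePressure` unfolded
  change _ = _ + _ + (_ + -∫ s in 0..t, effectivePressure a b R ε v θ χ 0 s)
    + ∫ s in 0..t, effectivePressure a b R ε v θ χ x s
  linarith [hlog x, hlog 0]

/-- Kazhikhov-type representation formula for the specific volume (base point
`n = 0`): for `C²` functions `(v,u,θ,χ)` on `ℝ × [0,T]` with `v > b`, `θ > 0`,
satisfying the mass and momentum equations of the 1D Lagrangian
Navier–Stokes/Allen–Cahn system with van der Waals pressure, setting
`B(x,t) = −a/v² + Rθ/(v−b) + (ε/2)χ_x²/v²`, one has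
`v(x,t) = D(x,t)·Y(t)·exp(∫₀ᵗ B(x,s) ds)` where
`D(x,t) = v(x,0)·exp(∫₀ˣ (u(y,t) − u(y,0)) dy)` and
`Y(t) = (v(0,t)/v(0,0))·exp(−∫₀ᵗ B(0,s) ds)`. -/
theorem kazhikhov_volume_representation
    (a b R ε T : ℝ)
    (ha : 0 < a) (hb : 0 < b) (hR : 0 < R) (hε : 0 < ε) (hT : 0 < T)
    (v u θ χ : ℝ → ℝ → ℝ)
    (hv : ContDiffOn ℝ 2 (fun p : ℝ × ℝ => v p.1 p.2) (Set.univ ×ˢ Set.Icc 0 T))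
    (hu : ContDiffOn ℝ 2 (fun p : ℝ × ℝ => u p.1 p.2) (Set.univ ×ˢ Set.Icc 0 T))
    (hθ : ContDiffOn ℝ 2 (fun p : ℝ × ℝ => θ p.1 p.2) (Set.univ ×ˢ Set.Icc 0 T))
    (hχ : ContDiffOn ℝ 2 (fun p : ℝ × ℝ => χ p.1 p.2) (Set.univ ×ˢ Set.Icc 0 T))
    (hvb : ∀ x : ℝ, ∀ t ∈ Set.Icc 0 T, b < v x t)
    (hθpos : ∀ x : ℝ, ∀ t ∈ Set.Icc 0 T, 0 < θ x t)
    (hmass : ∀ x : ℝ, ∀ t ∈ Set.Icc 0 T, pdt v x t = pdx u x t)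
    (hmom : ∀ x : ℝ, ∀ t ∈ Set.Icc 0 T,
      pdt u x t
        + pdx (fun x t => R * θ x t / (v x t - b) - a / (v x t) ^ 2) x t
      = pdx (fun x t => pdx u x t / v x t) x t
        - (ε / 2) * pdx (fun x t => (pdx χ x t) ^ 2 / (v x t) ^ 2) x t) :
    ∀ x : ℝ, ∀ t ∈ Set.Icc 0 T,
      v x t =
        (v x 0 * Real.exp (∫ y in (0:ℝ)..x, (u y t - u y 0)))
        * ((v 0 t / v 0 0) * Real.exp
            (-∫ s in (0:ℝ)..t,
              (-a / (v 0 s) ^ 2 + R * θ 0 s / (v 0 s - b)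
                + (ε / 2) * (pdx χ 0 s) ^ 2 / (v 0 s) ^ 2)))
        * Real.exp
            (∫ s in (0:ℝ)..t,
              (-a / (v x s) ^ 2 + R * θ x s / (v x s - b)
                + (ε / 2) * (pdx χ x s) ^ 2 / (v x s) ^ 2)) :=
  kazhikhov_volume_representation_general a b R ε T hb hT v u θ χ hv hu hθ hχ hvb hmass hmom
end

section
/- Let f : ℝ → ℝ be continuously differentiable with f' square-integrable on ℝ, suppose the set S = {x ∈ ℝ : f(x) > 0} has finite Lebesgue measure |S|, and suppose f(x) → ℓ as x → +∞ for some ℓ ≤ 0. Then for every x ∈ ℝ: max(f(x), 0)² ≤ |S| · ∫_ℝ f'(y)² dy. -/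
/-!
Given `ε > 0`, let `b` be the first point to the right of `x` with `f b ≤ ε`; it exists because
`f → ℓ ≤ 0`. Then `[x, b) ⊆ {f > 0}`, so `b - x ≤ |S|`, and the fundamental theorem of calculus
with Cauchy–Schwarz gives `(f x - f b)² ≤ (b - x) ∫ₓᵇ f'² ≤ |S| ∫ f'²`. Hence
`f x ≤ ε + √(|S| ∫ f'²)` for every `ε > 0`.
-/

open MeasureTheory Filter Set

theorem sq_integral_abs_le_measureReal_mul_integral_sq {α : Type*} [MeasurableSpace α]
    {μ : Measure α} [IsFiniteMeasure μ] {g : α → ℝ} (hg : MemLp g 2 μ) :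
    (∫ a, |g a| ∂μ) ^ 2 ≤ μ.real univ * ∫ a, g a ^ 2 ∂μ := by
  have holder := integral_mul_le_Lp_mul_Lq_of_nonneg Real.HolderConjugate.two_two
    (ae_of_all μ fun a => abs_nonneg (g a)) (ae_of_all μ fun _ => zero_le_one)
    (by rw [ENNReal.ofReal_ofNat]; exact hg.abs) (memLp_const (1 : ℝ))
  simp only [mul_one, integral_const, smul_eq_mul, ← Real.sqrt_eq_rpow, one_pow,
    Real.rpow_ofNat, sq_abs] at holder
  calc (∫ a, |g a| ∂μ) ^ 2 ≤ (√(∫ a, g a ^ 2 ∂μ) * √(μ.real univ)) ^ 2 :=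
        pow_le_pow_left₀ (integral_nonneg fun a => abs_nonneg _) holder 2
    _ = μ.real univ * ∫ a, g a ^ 2 ∂μ := by
        rw [mul_pow, Real.sq_sqrt (integral_nonneg fun a => sq_nonneg _),
          Real.sq_sqrt measureReal_nonneg, mul_comm]

theorem sq_sub_le_mul_intervalIntegral_deriv_sq {f : ℝ → ℝ} (hf : ContDiff ℝ 1 f) {a b : ℝ}
    (hab : a ≤ b) : (f b - f a) ^ 2 ≤ (b - a) * ∫ y in a..b, deriv f y ^ 2 := by
  have hf' : Continuous (deriv f) := hf.continuous_deriv le_rfl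
  have hftc : ∫ y in a..b, deriv f y = f b - f a :=
    intervalIntegral.integral_deriv_eq_sub (fun y _ => hf.differentiable one_ne_zero y)
      (hf'.intervalIntegrable a b)
  have hmem : MemLp (deriv f) 2 (volume.restrict (Ioc a b)) :=
    (memLp_two_iff_integrable_sq hf'.aestronglyMeasurable).2 (hf'.pow 2).integrableOn_Ioc
  have hCS := sq_integral_abs_le_measureReal_mul_integral_sq hmem
  rw [measureReal_restrict_apply_univ, Real.volume_real_Ioc_of_le hab] at hCS
  rw [intervalIntegral.integral_of_le hab]
  calc (f b - f a) ^ 2 = |∫ y in a..b, deriv f y| ^ 2 := by rw [hftc, sq_abs]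
    _ ≤ (∫ y in a..b, |deriv f y|) ^ 2 :=
        pow_le_pow_left₀ (abs_nonneg _) (intervalIntegral.abs_integral_le_integral_abs hab) 2
    _ ≤ _ := by rwa [intervalIntegral.integral_of_le hab]

theorem sub_le_toReal_volume_of_Ico_subset {s : Set ℝ} (hs : volume s ≠ ⊤) {a b : ℝ}
    (h : Ico a b ⊆ s) : b - a ≤ (volume s).toReal :=
  calc b - a ≤ (volume (Ico a b)).toReal := by
        rw [Real.volume_Ico, ENNReal.toReal_ofReal']; exact le_max_left _ _
    _ ≤ (volume s).toReal := ENNReal.toReal_mono hs (measure_mono h)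

theorem sq_sub_le_toReal_volume_mul_integral_deriv_sq {f : ℝ → ℝ} (hf : ContDiff ℝ 1 f)
    (hf'2 : Integrable (fun y => deriv f y ^ 2)) {s : Set ℝ} (hs : volume s ≠ ⊤) {a b : ℝ}
    (hab : a ≤ b) (h : Ico a b ⊆ s) :
    (f b - f a) ^ 2 ≤ (volume s).toReal * ∫ y, deriv f y ^ 2 := by
  refine (sq_sub_le_mul_intervalIntegral_deriv_sq hf hab).trans (mul_le_mul
    (sub_le_toReal_volume_of_Ico_subset hs h) ?_ ?_ ENNReal.toReal_nonneg)
  · rw [intervalIntegral.integral_of_le hab]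
    exact setIntegral_le_integral hf'2 (ae_of_all _ fun y => sq_nonneg _)
  · exact intervalIntegral.integral_nonneg hab fun y _ => sq_nonneg _

theorem Continuous.exists_le_forall_Ico_lt {f : ℝ → ℝ} (hf : Continuous f) {x c : ℝ}
    (h : ∃ y, x ≤ y ∧ f y ≤ c) : ∃ b, x ≤ b ∧ f b ≤ c ∧ ∀ y ∈ Ico x b, c < f y := by
  set T := Ici x ∩ {y | f y ≤ c}
  have hbdd : BddBelow T := ⟨x, fun y hy => hy.1⟩
  obtain ⟨hxb, hfb⟩ : sInf T ∈ T :=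
    (isClosed_Ici.inter (isClosed_le hf continuous_const)).csInf_mem h hbdd
  refine ⟨sInf T, hxb, hfb, fun y hy => not_le.1 fun hfy => ?_⟩
  exact (csInf_le hbdd ⟨hy.1, hfy⟩).not_gt hy.2

/-- Truncated sup bound: if `f` is `C¹` with `f'` square-integrable, the set
`S = {f > 0}` has finite Lebesgue measure, and `f(x) → ℓ ≤ 0` as `x → +∞`,
then `(f(x))₊² ≤ |S|·∫ f'²` for every `x`. -/
theorem truncated_sup_bound
    (f : ℝ → ℝ) (ℓ : ℝ) (hf : ContDiff ℝ 1 f)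
    (hf'2 : Integrable (fun y => (deriv f y) ^ 2))
    (hS : volume {x : ℝ | 0 < f x} ≠ ⊤)
    (hℓ : ℓ ≤ 0)
    (hlim : Tendsto f atTop (nhds ℓ)) :
    ∀ x : ℝ, (max (f x) 0) ^ 2 ≤
      (volume {x : ℝ | 0 < f x}).toReal * ∫ y : ℝ, (deriv f y) ^ 2 := by
  intro x
  set M := (volume {x : ℝ | 0 < f x}).toReal * ∫ y : ℝ, (deriv f y) ^ 2
  have hfx : f x ≤ √M := by
    refine le_of_forall_pos_le_add fun ε hε => ?_
    obtain ⟨y, hfy, hxy⟩ :=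
      ((hlim.eventually_lt_const (hℓ.trans_lt hε)).and (eventually_ge_atTop x)).exists
    obtain ⟨b, hxb, hfb, hlt⟩ := hf.continuous.exists_le_forall_Ico_lt ⟨y, hxy, hfy.le⟩
    have hbound := Real.abs_le_sqrt (sq_sub_le_toReal_volume_mul_integral_deriv_sq hf hf'2 hS hxb
      fun y hy => hε.trans (hlt y hy))
    linarith [neg_abs_le (f b - f x)]
  calc max (f x) 0 ^ 2 ≤ √M ^ 2 :=
        pow_le_pow_left₀ (le_max_right _ _) (max_le hfx (Real.sqrt_nonneg _)) 2
    _ = M := Real.sq_sqrt (mul_nonneg ENNReal.toReal_nonneg (integral_nonneg fun y => sq_nonneg _))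
end
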